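/- Let ≡ be an essential lattice congruence of the weak order on S_n whose arc ideal excludes some subarc-minimal arc α = (i,j,A,B) with A ≠ ∅ and B ≠ ∅. Let a = max(A) and b = min(B). Then the four arcs (i,a, A∩(i,a), B∩(i,a)), (a,j,∅,B∩(a,j)), (i,b,A∩(i,b),∅), and (b,j,A∩(b,j),B) all belong to the arc ideal of ≡, and the ≡-poset of the permutation whose noncrossing arc diagram is {α} has Hasse diagram containing the cover relations a ≺ i, a ≺ j, i ≺ b, j ≺ b; in particular this Hasse diagram is not a tree. -/

import Mathlib

open Relation Finset

/-- The undirected simple graph underlying a directed edge relation. -/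
def dirGraph {α : Type*} (E : α → α → Prop) : SimpleGraph α where
  Adj a b := a ≠ b ∧ (E a b ∨ E b a)
  symm := ⟨fun a b h => ⟨h.1.symm, h.2.symm⟩⟩
  loopless := ⟨fun a h => h.1 rfl⟩

/-- `x` lies in the subtree attached to `p` at `j`: every walk from `x` to `j`
passes through `p`. -/
def inSub {α : Type*} (E : α → α → Prop) (j p x : α) : Prop :=
  ∀ w : (dirGraph E).Walk x j, p ∈ w.support

def atMostTwo {α : Type*} (s : Set α) : Prop :=
  ∀ a ∈ s, ∀ b ∈ s, ∀ c ∈ s, a = b ∨ a = c ∨ b = c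

/-- A separating tree on `[n]`, encoded by its directed edge relation
(`E a b` means there is an edge directed from `a` to `b`, i.e. `b` is a parent of `a`). -/
def IsSepTree {n : ℕ} (E : Fin n → Fin n → Prop) : Prop :=
  (dirGraph E).IsTree ∧
  (∀ j, atMostTwo {p | E j p}) ∧
  (∀ j, atMostTwo {c | E c j}) ∧
  (∀ j p₁ p₂, E j p₁ → E j p₂ → p₁ ≠ p₂ →
    ∀ x₁ x₂, inSub E j p₁ x₁ → inSub E j p₂ x₂ →
      (x₁ < j ∧ j < x₂) ∨ (x₂ < j ∧ j < x₁)) ∧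
  (∀ j c₁ c₂, E c₁ j → E c₂ j → c₁ ≠ c₂ →
    ∀ x₁ x₂, inSub E j c₁ x₁ → inSub E j c₂ x₂ →
      (x₁ < j ∧ j < x₂) ∨ (x₂ < j ∧ j < x₁))
/-- An arc `(a, b, A, B)` on `[n]`: endpoints `a < b` and a partition
`A ⊔ B` of the open interval `]a, b[`. -/
structure Arc (n : ℕ) where
  a : Fin n
  b : Fin n
  A : Finset (Fin n)
  B : Finset (Fin n)
  hab : a < b
  hdisj : Disjoint A B
  hunion : A ∪ B = Finset.Ioo a b

/-- `Subarc α β` : `α` is a subarc of `β`. -/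
def Subarc {n : ℕ} (α β : Arc n) : Prop :=
  β.a ≤ α.a ∧ α.b ≤ β.b ∧ α.A ⊆ β.A ∧ α.B ⊆ β.B

/-- An arc ideal: a lower set for the subarc order. -/
def IsArcIdeal {n : ℕ} (I : Set (Arc n)) : Prop :=
  ∀ α β : Arc n, Subarc α β → β ∈ I → α ∈ I

/-- An ideal is essential when it contains all basic arcs `(i, i+1, ∅, ∅)`. -/
def EssentialIdeal {n : ℕ} (I : Set (Arc n)) : Prop :=
  ∀ α : Arc n, (α.b : ℕ) = (α.a : ℕ) + 1 → α ∈ I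

/-- `α` is a subarc-minimal arc of the complement of `I`. -/
def MinNonArc {n : ℕ} (I : Set (Arc n)) (α : Arc n) : Prop :=
  α ∉ I ∧ ∀ β : Arc n, Subarc β α → β ∉ I → β = α

/-- An ideal is simple when all subarc-minimal arcs of its complement are
up arcs (`B = ∅`) or down arcs (`A = ∅`). -/
def SimpleIdeal {n : ℕ} (I : Set (Arc n)) : Prop :=
  ∀ α : Arc n, MinNonArc I α → α.B = ∅ ∨ α.A = ∅
/-- `(p, q)` is an ascending empty rectangle pair in the table of `σ`. -/
def EmptyRectUp {n : ℕ} (σ : Equiv.Perm (Fin n)) (p q : Fin n) : Prop :=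
  p < q ∧ σ p < σ q ∧ ∀ v : Fin n, σ p < v → v < σ q → σ.symm v < p ∨ q < σ.symm v

/-- `(p, q)` is a descending empty rectangle pair in the table of `σ`. -/
def EmptyRectDown {n : ℕ} (σ : Equiv.Perm (Fin n)) (p q : Fin n) : Prop :=
  p < q ∧ σ q < σ p ∧ ∀ v : Fin n, σ q < v → v < σ p → σ.symm v < p ∨ q < σ.symm v

/-- The arc `α↗(p, q, σ)` associated to an ascending empty rectangle pair. -/
def arcUp {n : ℕ} (σ : Equiv.Perm (Fin n)) (p q : Fin n) (h : EmptyRectUp σ p q) :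
    Arc n where
  a := σ p
  b := σ q
  A := (Finset.Ioo (σ p) (σ q)).filter (fun v => σ.symm v < p)
  B := (Finset.Ioo (σ p) (σ q)).filter (fun v => q < σ.symm v)
  hab := h.2.1
  hdisj := by
    rw [Finset.disjoint_left]
    rintro v hv1 hv2
    simp only [Finset.mem_filter] at hv1 hv2
    exact absurd (hv1.2.trans h.1) (lt_asymm hv2.2)
  hunion := by
    ext v
    simp only [Finset.mem_union, Finset.mem_filter, Finset.mem_Ioo]
    constructor
    · rintro (⟨hv, _⟩ | ⟨hv, _⟩) <;> exact hv
    · intro hv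
      rcases h.2.2 v hv.1 hv.2 with h' | h'
      · exact Or.inl ⟨hv, h'⟩
      · exact Or.inr ⟨hv, h'⟩

/-- The arc `α↘(p, q, σ)` associated to a descending empty rectangle pair. -/
def arcDown {n : ℕ} (σ : Equiv.Perm (Fin n)) (p q : Fin n) (h : EmptyRectDown σ p q) :
    Arc n where
  a := σ q
  b := σ p
  A := (Finset.Ioo (σ q) (σ p)).filter (fun v => σ.symm v < p)
  B := (Finset.Ioo (σ q) (σ p)).filter (fun v => q < σ.symm v)
  hab := h.2.1
  hdisj := by
    rw [Finset.disjoint_left]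
    rintro v hv1 hv2
    simp only [Finset.mem_filter] at hv1 hv2
    exact absurd (hv1.2.trans h.1) (lt_asymm hv2.2)
  hunion := by
    ext v
    simp only [Finset.mem_union, Finset.mem_filter, Finset.mem_Ioo]
    constructor
    · rintro (⟨hv, _⟩ | ⟨hv, _⟩) <;> exact hv
    · intro hv
      rcases h.2.2 v hv.1 hv.2 with h' | h'
      · exact Or.inl ⟨hv, h'⟩
      · exact Or.inr ⟨hv, h'⟩

/-- The slope order on ascending pairs: `(p, q) ⪯ (r, s)`. -/
def slopeLeUp {n : ℕ} (σ : Equiv.Perm (Fin n)) (p q r s : Fin n) : Prop :=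
  r ≤ p ∧ q ≤ s ∧ σ r ≤ σ p ∧ σ q ≤ σ s

/-- The slope order on descending pairs: `(p, q) ⪯ (r, s)`. -/
def slopeLeDown {n : ℕ} (σ : Equiv.Perm (Fin n)) (p q r s : Fin n) : Prop :=
  r ≤ p ∧ q ≤ s ∧ σ s ≤ σ q ∧ σ p ≤ σ r

/-- `(p, q)` belongs to `⊠_≡(σ)`: it is a slope-maximal ascending empty rectangle
pair whose associated arc lies in the arc ideal `I`. -/
def BoxUpSel {n : ℕ} (I : Set (Arc n)) (σ : Equiv.Perm (Fin n)) (p q : Fin n) : Prop :=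
  ∃ h : EmptyRectUp σ p q, arcUp σ p q h ∈ I ∧
    ∀ (r s : Fin n) (h' : EmptyRectUp σ r s),
      arcUp σ r s h' ∈ I → slopeLeUp σ p q r s → r = p ∧ s = q

/-- `(p, q)` belongs to `⊠̄_≡(σ)`: it is a slope-maximal descending empty rectangle
pair whose associated arc lies in the arc ideal `I`. -/
def BoxDownSel {n : ℕ} (I : Set (Arc n)) (σ : Equiv.Perm (Fin n)) (p q : Fin n) : Prop :=
  ∃ h : EmptyRectDown σ p q, arcDown σ p q h ∈ I ∧
    ∀ (r s : Fin n) (h' : EmptyRectDown σ r s),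
      arcDown σ r s h' ∈ I → slopeLeDown σ p q r s → r = p ∧ s = q

/-- The Hasse diagram of the `≡`-poset of `σ` obtained by the insertion map:
cover relations `σ p ≺ σ q` for `(p, q) ∈ ⊠_≡(σ) ∪ ⊠̄_≡(σ)`. -/
def insEdge {n : ℕ} (I : Set (Arc n)) (σ : Equiv.Perm (Fin n)) (x y : Fin n) : Prop :=
  ∃ p q : Fin n, x = σ p ∧ y = σ q ∧ (BoxUpSel I σ p q ∨ BoxDownSel I σ p q)

/-!
By minimality of `α`, every proper subarc of `α` lies in the ideal, and the four arcs in question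
are proper subarcs of `α` (the one starting at `a = max A` has no left points, the one ending at
`b = min B` no right points). In the permutation `σ` whose noncrossing arc diagram is `{α}`, the
pairs of positions of `(a, i)`, `(a, j)`, `(i, b)`, `(j, b)` are empty rectangle pairs whose
associated arcs are exactly these four subarcs. An empty rectangle pair is automatically
slope-maximal among empty rectangle pairs, so all four give cover relations, and they close up
into the cycle `i – a – j – b – i`.
-/

theorem Finset.inter_Ioo_eq_empty_of_forall_le {ι : Type*} [LinearOrder ι] [LocallyFiniteOrder ι]
    {s : Finset ι} {a : ι} (h : ∀ x ∈ s, x ≤ a) (d : ι) : s ∩ Ioo a d = ∅ :=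
  eq_empty_of_forall_notMem fun x hx =>
    (h x (mem_inter.1 hx).1).not_gt (mem_Ioo.1 (mem_inter.1 hx).2).1

theorem Finset.inter_Ioo_eq_empty_of_forall_ge {ι : Type*} [LinearOrder ι] [LocallyFiniteOrder ι]
    {s : Finset ι} {b : ι} (h : ∀ x ∈ s, b ≤ x) (c : ι) : s ∩ Ioo c b = ∅ :=
  eq_empty_of_forall_notMem fun x hx =>
    (h x (mem_inter.1 hx).1).not_gt (mem_Ioo.1 (mem_inter.1 hx).2).2

namespace Arc

variable {n : ℕ}

theorem ext {γ δ : Arc n} (ha : γ.a = δ.a) (hb : γ.b = δ.b) (hA : γ.A = δ.A) (hB : γ.B = δ.B) :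
    γ = δ := by
  cases γ
  cases δ
  subst_vars
  rfl

theorem mem_Ioo_of_mem_A (γ : Arc n) {v : Fin n} (hv : v ∈ γ.A) : γ.a < v ∧ v < γ.b :=
  mem_Ioo.1 (γ.hunion ▸ mem_union_left _ hv)

theorem mem_Ioo_of_mem_B (γ : Arc n) {v : Fin n} (hv : v ∈ γ.B) : γ.a < v ∧ v < γ.b :=
  mem_Ioo.1 (γ.hunion ▸ mem_union_right _ hv)

theorem mem_A_or_mem_B (γ : Arc n) {v : Fin n} (h₁ : γ.a < v) (h₂ : v < γ.b) :
    v ∈ γ.A ∨ v ∈ γ.B :=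
  mem_union.1 (γ.hunion.symm ▸ mem_Ioo.2 ⟨h₁, h₂⟩)

theorem filter_Ioo_eq_A (γ : Arc n) {P : Fin n → Prop} [DecidablePred P]
    (hA : ∀ v ∈ γ.A, P v) (hB : ∀ v ∈ γ.B, ¬ P v) : (Ioo γ.a γ.b).filter P = γ.A := by
  ext v
  rw [← γ.hunion, mem_filter, mem_union]
  constructor
  · rintro ⟨hv | hv, hP⟩
    exacts [hv, absurd hP (hB v hv)]
  · exact fun hv => ⟨Or.inl hv, hA v hv⟩

theorem filter_Ioo_eq_B (γ : Arc n) {P : Fin n → Prop} [DecidablePred P]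
    (hA : ∀ v ∈ γ.A, ¬ P v) (hB : ∀ v ∈ γ.B, P v) : (Ioo γ.a γ.b).filter P = γ.B := by
  ext v
  rw [← γ.hunion, mem_filter, mem_union]
  constructor
  · rintro ⟨hv | hv, hP⟩
    exacts [absurd hP (hA v hv), hv]
  · exact fun hv => ⟨Or.inr hv, hB v hv⟩

def restrict (α : Arc n) (c d : Fin n) (hcd : c < d) (hc : α.a ≤ c) (hd : d ≤ α.b) : Arc n where
  a := c
  b := d
  A := α.A ∩ Ioo c d
  B := α.B ∩ Ioo c d
  hab := hcd
  hdisj := α.hdisj.mono inter_subset_left inter_subset_left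
  hunion := by
    rw [← union_inter_distrib_right, α.hunion, inter_eq_right]
    exact Ioo_subset_Ioo hc hd

theorem restrict_subarc {α : Arc n} {c d : Fin n} {hcd : c < d} {hc : α.a ≤ c} {hd : d ≤ α.b} :
    Subarc (α.restrict c d hcd hc hd) α :=
  ⟨hc, hd, inter_subset_left, inter_subset_left⟩

/-- The values listed first by the permutation whose noncrossing arc diagram is `{α}`. -/
def leftBlock (α : Arc n) : Finset (Fin n) :=
  Iio α.a ∪ α.A ∪ {α.b}

theorem a_notMem_leftBlock (α : Arc n) : α.a ∉ α.leftBlock := by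
  simp only [leftBlock, mem_union, mem_Iio, mem_singleton, lt_irrefl, false_or, not_or]
  exact ⟨fun h => (α.mem_Ioo_of_mem_A h).1.false, α.hab.ne⟩

theorem b_mem_leftBlock (α : Arc n) : α.b ∈ α.leftBlock :=
  mem_union_right _ (mem_singleton_self _)

theorem mem_leftBlock_of_mem_A (α : Arc n) {v : Fin n} (hv : v ∈ α.A) : v ∈ α.leftBlock :=
  mem_union_left _ (mem_union_right _ hv)

theorem notMem_leftBlock_of_mem_B (α : Arc n) {v : Fin n} (hv : v ∈ α.B) :
    v ∉ α.leftBlock := by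
  obtain ⟨hav, hvb⟩ := α.mem_Ioo_of_mem_B hv
  simp only [leftBlock, mem_union, mem_Iio, mem_singleton, not_or]
  exact ⟨⟨hav.not_gt, fun h => disjoint_left.1 α.hdisj h hv⟩, hvb.ne⟩

end Arc

theorem Subarc.A_subset_leftBlock {n : ℕ} {γ α : Arc n} (h : Subarc γ α) : γ.A ⊆ α.leftBlock :=
  fun _ hv => α.mem_leftBlock_of_mem_A (h.2.2.1 hv)

theorem Subarc.disjoint_B_leftBlock {n : ℕ} {γ α : Arc n} (h : Subarc γ α) :
    Disjoint γ.B α.leftBlock :=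
  disjoint_left.2 fun _ hv => α.notMem_leftBlock_of_mem_B (h.2.2.2 hv)

theorem MinNonArc.mem_of_subarc {n : ℕ} {I : Set (Arc n)} {α β : Arc n} (hmin : MinNonArc I α)
    (hsub : Subarc β α) (hne : β ≠ α) : β ∈ I :=
  by_contra fun h => hne (hmin.2 β hsub h)

theorem MinNonArc.restrict_mem {n : ℕ} {I : Set (Arc n)} {α : Arc n} (hmin : MinNonArc I α)
    {c d : Fin n} {hcd : c < d} {hc : α.a ≤ c} {hd : d ≤ α.b} (hne : c ≠ α.a ∨ d ≠ α.b) :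
    α.restrict c d hcd hc hd ∈ I :=
  hmin.mem_of_subarc Arc.restrict_subarc fun h => by
    rcases hne with hne | hne
    exacts [hne (congrArg Arc.a h), hne (congrArg Arc.b h)]

section Insertion

variable {n : ℕ} {I : Set (Arc n)} {σ : Equiv.Perm (Fin n)}

/-- A pair `(p, q)` inside the rectangle of an empty rectangle pair `(r, s)` is `(r, s)` itself,
since otherwise `σ p` or `σ q` would be a point of that rectangle. -/
theorem EmptyRectUp.eq_of_slopeLeUp {p q r s : Fin n} (h : EmptyRectUp σ r s) (hpq : p < q)
    (hσ : σ p < σ q) (hle : slopeLeUp σ p q r s) : r = p ∧ s = q := by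
  obtain ⟨hrp, hqs, hσrp, hσqs⟩ := hle
  have hr : σ r = σ p := hσrp.eq_or_lt.resolve_right fun hlt => by
    have := h.2.2 (σ p) hlt (hσ.trans_le hσqs)
    simp only [Equiv.symm_apply_apply] at this
    rcases this with h' | h' <;> order
  have hs : σ q = σ s := hσqs.eq_or_lt.resolve_right fun hlt => by
    have := h.2.2 (σ q) (hr ▸ hσ) hlt
    simp only [Equiv.symm_apply_apply, σ.injective hr] at this
    rcases this with h' | h' <;> order
  exact ⟨σ.injective hr, (σ.injective hs).symm⟩

theorem EmptyRectDown.eq_of_slopeLeDown {p q r s : Fin n} (h : EmptyRectDown σ r s) (hpq : p < q)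
    (hσ : σ q < σ p) (hle : slopeLeDown σ p q r s) : r = p ∧ s = q := by
  obtain ⟨hrp, hqs, hσsq, hσpr⟩ := hle
  have hr : σ p = σ r := hσpr.eq_or_lt.resolve_right fun hlt => by
    have := h.2.2 (σ p) (hσsq.trans_lt hσ) hlt
    simp only [Equiv.symm_apply_apply] at this
    rcases this with h' | h' <;> order
  have hs : σ s = σ q := hσsq.eq_or_lt.resolve_right fun hlt => by
    have := h.2.2 (σ q) hlt (hr ▸ hσ)
    simp only [Equiv.symm_apply_apply, (σ.injective hr).symm] at this
    rcases this with h' | h' <;> order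
  exact ⟨(σ.injective hr).symm, σ.injective hs⟩

theorem insEdge_of_up {γ : Arc n} (hγ : γ ∈ I) (hpos : σ.symm γ.a < σ.symm γ.b)
    (hA : ∀ v ∈ γ.A, σ.symm v < σ.symm γ.a) (hB : ∀ v ∈ γ.B, σ.symm γ.b < σ.symm v) :
    insEdge I σ γ.a γ.b := by
  set p := σ.symm γ.a
  set q := σ.symm γ.b
  have hp : σ p = γ.a := σ.apply_symm_apply _
  have hq : σ q = γ.b := σ.apply_symm_apply _
  have hrect : EmptyRectUp σ p q := by
    refine ⟨hpos, hp ▸ hq ▸ γ.hab, fun v h₁ h₂ => ?_⟩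
    rw [hp] at h₁
    rw [hq] at h₂
    exact (γ.mem_A_or_mem_B h₁ h₂).imp (hA v) (hB v)
  have harc : arcUp σ p q hrect = γ := by
    refine Arc.ext hp hq ?_ ?_ <;> simp only [arcUp, hp, hq]
    · exact γ.filter_Ioo_eq_A hA fun v hv => (hpos.trans (hB v hv)).not_gt
    · exact γ.filter_Ioo_eq_B (fun v hv => (hpos.trans' (hA v hv)).not_gt) hB
  exact ⟨p, q, hp.symm, hq.symm, Or.inl ⟨hrect, harc ▸ hγ,
    fun _ _ h _ hle => h.eq_of_slopeLeUp hpos hrect.2.1 hle⟩⟩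

theorem insEdge_of_down {γ : Arc n} (hγ : γ ∈ I) (hpos : σ.symm γ.b < σ.symm γ.a)
    (hA : ∀ v ∈ γ.A, σ.symm v < σ.symm γ.b) (hB : ∀ v ∈ γ.B, σ.symm γ.a < σ.symm v) :
    insEdge I σ γ.b γ.a := by
  set p := σ.symm γ.b
  set q := σ.symm γ.a
  have hp : σ p = γ.b := σ.apply_symm_apply _
  have hq : σ q = γ.a := σ.apply_symm_apply _
  have hrect : EmptyRectDown σ p q := by
    refine ⟨hpos, hp ▸ hq ▸ γ.hab, fun v h₁ h₂ => ?_⟩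
    rw [hq] at h₁
    rw [hp] at h₂
    exact (γ.mem_A_or_mem_B h₁ h₂).imp (hA v) (hB v)
  have harc : arcDown σ p q hrect = γ := by
    refine Arc.ext hq hp ?_ ?_ <;> simp only [arcDown, hp, hq]
    · exact γ.filter_Ioo_eq_A hA fun v hv => (hpos.trans (hB v hv)).not_gt
    · exact γ.filter_Ioo_eq_B (fun v hv => (hpos.trans' (hA v hv)).not_gt) hB
  exact ⟨p, q, hp.symm, hq.symm, Or.inr ⟨hrect, harc ▸ hγ,
    fun _ _ h _ hle => h.eq_of_slopeLeDown hpos hrect.2.1 hle⟩⟩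

end Insertion

def ListsBlockFirst {n : ℕ} (σ : Equiv.Perm (Fin n)) (S : Finset (Fin n)) : Prop :=
  (∀ u v, u ∈ S → v ∉ S → σ.symm u < σ.symm v) ∧
    ∀ u v, (u ∈ S ↔ v ∈ S) → (σ.symm u < σ.symm v ↔ u < v)

namespace ListsBlockFirst

variable {n : ℕ} {I : Set (Arc n)} {σ : Equiv.Perm (Fin n)} {S : Finset (Fin n)}

theorem symm_lt_of_mem_of_notMem (h : ListsBlockFirst σ S) {u v : Fin n} (hu : u ∈ S)
    (hv : v ∉ S) : σ.symm u < σ.symm v :=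
  h.1 u v hu hv

theorem symm_lt_of_mem_of_mem (h : ListsBlockFirst σ S) {u v : Fin n} (hu : u ∈ S) (hv : v ∈ S)
    (huv : u < v) : σ.symm u < σ.symm v :=
  (h.2 u v (iff_of_true hu hv)).2 huv

theorem symm_lt_of_notMem_of_notMem (h : ListsBlockFirst σ S) {u v : Fin n} (hu : u ∉ S)
    (hv : v ∉ S) (huv : u < v) : σ.symm u < σ.symm v :=
  (h.2 u v (iff_of_false hu hv)).2 huv

theorem insEdge_down (hσ : ListsBlockFirst σ S) {γ : Arc n} (hγ : γ ∈ I) (hA : γ.A ⊆ S)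
    (hB : Disjoint γ.B S) (ha : γ.a ∉ S) (hb : γ.b ∈ S) : insEdge I σ γ.b γ.a :=
  insEdge_of_down hγ (hσ.symm_lt_of_mem_of_notMem hb ha)
    (fun _ hv => hσ.symm_lt_of_mem_of_mem (hA hv) hb (γ.mem_Ioo_of_mem_A hv).2)
    (fun _ hv => hσ.symm_lt_of_notMem_of_notMem ha (disjoint_left.1 hB hv) (γ.mem_Ioo_of_mem_B hv).1)

theorem insEdge_up_of_A_eq_empty (hσ : ListsBlockFirst σ S) {γ : Arc n} (hγ : γ ∈ I)
    (hA : γ.A = ∅) (hB : Disjoint γ.B S) (ha : γ.a ∈ S) (hb : γ.b ∈ S) : insEdge I σ γ.a γ.b :=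
  insEdge_of_up hγ (hσ.symm_lt_of_mem_of_mem ha hb γ.hab) (by simp [hA])
    (fun _ hv => hσ.symm_lt_of_mem_of_notMem hb (disjoint_left.1 hB hv))

theorem insEdge_up_of_B_eq_empty (hσ : ListsBlockFirst σ S) {γ : Arc n} (hγ : γ ∈ I)
    (hA : γ.A ⊆ S) (hB : γ.B = ∅) (ha : γ.a ∉ S) (hb : γ.b ∉ S) : insEdge I σ γ.a γ.b :=
  insEdge_of_up hγ (hσ.symm_lt_of_notMem_of_notMem ha hb γ.hab)
    (fun _ hv => hσ.symm_lt_of_mem_of_notMem (hA hv) ha) (by simp [hB])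

end ListsBlockFirst

theorem SimpleGraph.not_isAcyclic_of_cycle4 {V : Type*} {G : SimpleGraph V} {w x y z : V}
    (hwx : G.Adj w x) (hxy : G.Adj x y) (hyz : G.Adj y z) (hzw : G.Adj z w) (hwy : w ≠ y)
    (hxz : x ≠ z) : ¬ G.IsAcyclic := by
  intro h
  refine h (.cons hwx (.cons hxy (.cons hyz (.cons hzw .nil)))) ?_
  have := hwx.ne
  have := hxy.ne
  have := hyz.ne
  have := hzw.ne
  rw [Walk.isCycle_def, Walk.isTrail_def]
  simp [Walk.edges]
  tauto

theorem stmt8_general {n : ℕ} (I : Set (Arc n))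
    (α : Arc n) (hmin : MinNonArc I α) (a b : Fin n)
    (ha : a ∈ α.A) (hamax : ∀ x ∈ α.A, x ≤ a)
    (hb : b ∈ α.B) (hbmin : ∀ x ∈ α.B, b ≤ x) :
    ((∃ β ∈ I, β.a = α.a ∧ β.b = a ∧
        β.A = α.A ∩ Finset.Ioo α.a a ∧ β.B = α.B ∩ Finset.Ioo α.a a) ∧
     (∃ β ∈ I, β.a = a ∧ β.b = α.b ∧
        β.A = ∅ ∧ β.B = α.B ∩ Finset.Ioo a α.b) ∧
     (∃ β ∈ I, β.a = α.a ∧ β.b = b ∧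
        β.A = α.A ∩ Finset.Ioo α.a b ∧ β.B = ∅) ∧
     (∃ β ∈ I, β.a = b ∧ β.b = α.b ∧
        β.A = α.A ∩ Finset.Ioo b α.b ∧ β.B = α.B ∩ Finset.Ioo b α.b)) ∧
    (∀ σ : Equiv.Perm (Fin n),
      (∀ u v : Fin n, u ∈ Finset.Iio α.a ∪ α.A ∪ {α.b} →
        v ∉ Finset.Iio α.a ∪ α.A ∪ {α.b} → σ.symm u < σ.symm v) →
      (∀ u v : Fin n, (u ∈ Finset.Iio α.a ∪ α.A ∪ {α.b} ↔
        v ∈ Finset.Iio α.a ∪ α.A ∪ {α.b}) → (σ.symm u < σ.symm v ↔ u < v)) →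
      insEdge I σ a α.a ∧ insEdge I σ a α.b ∧
      insEdge I σ α.a b ∧ insEdge I σ α.b b ∧
      ¬ (dirGraph (insEdge I σ)).IsTree) := by
  obtain ⟨hia, haj⟩ := α.mem_Ioo_of_mem_A ha
  obtain ⟨hib, hbj⟩ := α.mem_Ioo_of_mem_B hb
  have h₁ : α.restrict α.a a hia le_rfl haj.le ∈ I := hmin.restrict_mem (.inr haj.ne)
  have h₂ : α.restrict a α.b haj hia.le le_rfl ∈ I := hmin.restrict_mem (.inl hia.ne')
  have h₃ : α.restrict α.a b hib le_rfl hbj.le ∈ I := hmin.restrict_mem (.inr hbj.ne)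
  have h₄ : α.restrict b α.b hbj hib.le le_rfl ∈ I := hmin.restrict_mem (.inl hib.ne')
  have hA₂ := inter_Ioo_eq_empty_of_forall_le hamax α.b
  have hB₃ := inter_Ioo_eq_empty_of_forall_ge hbmin α.a
  refine ⟨⟨⟨_, h₁, rfl, rfl, rfl, rfl⟩, ⟨_, h₂, rfl, rfl, hA₂, rfl⟩, ⟨_, h₃, rfl, rfl, rfl, hB₃⟩,
    ⟨_, h₄, rfl, rfl, rfl, rfl⟩⟩, fun σ hσ₁ hσ₂ => ?_⟩
  have hσ : ListsBlockFirst σ α.leftBlock := ⟨hσ₁, hσ₂⟩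
  have haS := α.mem_leftBlock_of_mem_A ha
  have hbS := α.notMem_leftBlock_of_mem_B hb
  have e₁ : insEdge I σ a α.a := hσ.insEdge_down h₁ Arc.restrict_subarc.A_subset_leftBlock
    Arc.restrict_subarc.disjoint_B_leftBlock α.a_notMem_leftBlock haS
  have e₂ : insEdge I σ a α.b := hσ.insEdge_up_of_A_eq_empty h₂ hA₂
    Arc.restrict_subarc.disjoint_B_leftBlock haS α.b_mem_leftBlock
  have e₃ : insEdge I σ α.a b := hσ.insEdge_up_of_B_eq_empty h₃
    Arc.restrict_subarc.A_subset_leftBlock hB₃ α.a_notMem_leftBlock hbS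
  have e₄ : insEdge I σ α.b b := hσ.insEdge_down h₄ Arc.restrict_subarc.A_subset_leftBlock
    Arc.restrict_subarc.disjoint_B_leftBlock hbS α.b_mem_leftBlock
  refine ⟨e₁, e₂, e₃, e₄, fun htree => SimpleGraph.not_isAcyclic_of_cycle4 (G := dirGraph (insEdge I σ))
    ⟨hia.ne, .inr e₁⟩ ⟨haj.ne, .inl e₂⟩ ⟨hbj.ne', .inl e₄⟩ ⟨hib.ne', .inr e₃⟩ α.hab.ne
    (fun h => disjoint_left.1 α.hdisj ha (h ▸ hb)) htree.isAcyclic⟩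

/-- if the arc ideal of an essential congruence excludes a
subarc-minimal arc `α = (i, j, A, B)` with `A ≠ ∅ ≠ B`, `a = max A`, `b = min B`,
then the four indicated subarcs of `α` belong to the ideal, and the insertion of
the permutation whose noncrossing arc diagram is `{α}` (the permutation listing
`Iio i ∪ A ∪ {j}` increasingly, then the remaining values increasingly) produces
the cover relations `a ≺ i`, `a ≺ j`, `i ≺ b`, `j ≺ b`; in particular this Hasse
diagram is not a tree. -/
theorem stmt8 {n : ℕ} (I : Set (Arc n))
    (hI : IsArcIdeal I) (hess : EssentialIdeal I)
    (α : Arc n) (hmin : MinNonArc I α) (a b : Fin n)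
    (ha : a ∈ α.A) (hamax : ∀ x ∈ α.A, x ≤ a)
    (hb : b ∈ α.B) (hbmin : ∀ x ∈ α.B, b ≤ x) :
    ((∃ β ∈ I, β.a = α.a ∧ β.b = a ∧
        β.A = α.A ∩ Finset.Ioo α.a a ∧ β.B = α.B ∩ Finset.Ioo α.a a) ∧
     (∃ β ∈ I, β.a = a ∧ β.b = α.b ∧
        β.A = ∅ ∧ β.B = α.B ∩ Finset.Ioo a α.b) ∧
     (∃ β ∈ I, β.a = α.a ∧ β.b = b ∧
        β.A = α.A ∩ Finset.Ioo α.a b ∧ β.B = ∅) ∧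
     (∃ β ∈ I, β.a = b ∧ β.b = α.b ∧
        β.A = α.A ∩ Finset.Ioo b α.b ∧ β.B = α.B ∩ Finset.Ioo b α.b)) ∧
    (∀ σ : Equiv.Perm (Fin n),
      (∀ u v : Fin n, u ∈ Finset.Iio α.a ∪ α.A ∪ {α.b} →
        v ∉ Finset.Iio α.a ∪ α.A ∪ {α.b} → σ.symm u < σ.symm v) →
      (∀ u v : Fin n, (u ∈ Finset.Iio α.a ∪ α.A ∪ {α.b} ↔
        v ∈ Finset.Iio α.a ∪ α.A ∪ {α.b}) → (σ.symm u < σ.symm v ↔ u < v)) →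
      insEdge I σ a α.a ∧ insEdge I σ a α.b ∧
      insEdge I σ α.a b ∧ insEdge I σ α.b b ∧
      ¬ (dirGraph (insEdge I σ)).IsTree) :=
  stmt8_general I α hmin a b ha hamax hb hbmin
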